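/- arXiv:2304.00291 — 2 statements merged into one kernel-verified Lean document; each statement's English description precedes it below -/
import Mathlib

section
/- Let A be a finite type, let x, y : A → ℝ, let (Ω, P) be a probability space, and let h : Ω → (A → ℝ) be a random function such that for every a ∈ A, h(a)² = 1 almost surely, and for every pair of distinct a, b ∈ A, E[h(a) · h(b)] = 0. Then E[(∑_{a ∈ A} x(a) · h(a)) · (∑_{b ∈ A} y(b) · h(b))] = ∑_{a ∈ A} x(a) · y(a). -/
open MeasureTheory

/-- Theorem 1, part 1 (single hash): the expected product of the random projections
of `x` and `y` along a random sign function `h` equals the kernel value `⟨x, y⟩`. -/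
theorem single_hash_projection_unbiased
    {A Ω : Type*} [Fintype A] [MeasurableSpace Ω]
    (P : Measure Ω) [IsProbabilityMeasure P]
    (x y : A → ℝ)
    (h : Ω → A → ℝ)
    (hmeas : ∀ a : A, Measurable (fun ω => h ω a))
    (hsq : ∀ a : A, ∀ᵐ ω ∂P, (h ω a) ^ 2 = 1)
    (huncorr : ∀ a b : A, a ≠ b → ∫ ω, h ω a * h ω b ∂P = 0) :
    ∫ ω, (∑ a : A, x a * h ω a) * (∑ b : A, y b * h ω b) ∂P
      = ∑ a : A, x a * y a := by
  have hint : ∀ a b : A, Integrable (fun ω => h ω a * h ω b) P := by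
    intro a b
    refine Integrable.mono' (integrable_const (1 : ℝ))
      (((hmeas a).mul (hmeas b)).aestronglyMeasurable) ?_
    filter_upwards [hsq a, hsq b] with ω ha hb
    have h1 : |h ω a| = 1 := by nlinarith [abs_nonneg (h ω a), sq_abs (h ω a)]
    have h2 : |h ω b| = 1 := by nlinarith [abs_nonneg (h ω b), sq_abs (h ω b)]
    simp [abs_mul, h1, h2]
  have key : ∀ ω : Ω, (∑ a : A, x a * h ω a) * (∑ b : A, y b * h ω b)
      = ∑ a : A, ∑ b : A, (x a * y b) * (h ω a * h ω b) := by
    intro ω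
    rw [Finset.sum_mul_sum]
    refine Finset.sum_congr rfl fun a _ => Finset.sum_congr rfl fun b _ => ?_
    ring
  calc ∫ ω, (∑ a : A, x a * h ω a) * (∑ b : A, y b * h ω b) ∂P
      = ∫ ω, ∑ a : A, ∑ b : A, (x a * y b) * (h ω a * h ω b) ∂P := by
        simp only [key]
    _ = ∑ a : A, ∑ b : A, (x a * y b) * ∫ ω, h ω a * h ω b ∂P := by
        rw [integral_finset_sum _ fun a _ =>
          integrable_finset_sum _ fun b _ => (hint a b).const_mul _]
        refine Finset.sum_congr rfl fun a _ => ?_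
        rw [integral_finset_sum _ fun b _ => (hint a b).const_mul _]
        exact Finset.sum_congr rfl fun b _ => MeasureTheory.integral_const_mul _ _
    _ = ∑ a : A, x a * y a := by
        refine Finset.sum_congr rfl fun a _ => ?_
        rw [Finset.sum_eq_single a]
        · have : ∫ ω, h ω a * h ω a ∂P = 1 := by
            have : (fun ω => h ω a * h ω a) =ᵐ[P] fun _ => (1 : ℝ) := by
              filter_upwards [hsq a] with ω ha
              nlinarith
            rw [integral_congr_ae this]
            simp
          rw [this]; ring
        · intro b _ hb
          rw [huncorr a b (Ne.symm hb), mul_zero]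
        · intro ha; exact absurd (Finset.mem_univ a) ha
end

section
/- Let A be a finite type, let x, y : A → ℝ, let 0 < ε < 1 and 0 < δ < 1, and let t be a positive integer with t ≥ (2/ε²) · ln(2/δ). Let (Ω, P) be a probability space and let h⁽¹⁾, …, h⁽ᵗ⁾ : Ω → (A → ℝ) be mutually independent random functions such that for every i and every a ∈ A, h⁽ⁱ⁾(a)² = 1 almost surely, and for every i and every pair of distinct a, b ∈ A, E[h⁽ⁱ⁾(a) · h⁽ⁱ⁾(b)] = 0. Define x̂ᵢ = (1/√t) · ∑_{a ∈ A} x(a) · h⁽ⁱ⁾(a) and ŷᵢ = (1/√t) · ∑_{a ∈ A} y(a) · h⁽ⁱ⁾(a), and write ‖x‖₁ = ∑_{a ∈ A} |x(a)| and ‖y‖₁ = ∑_{a ∈ A} |y(a)|. Then P[|∑_{i=1}^{t} x̂ᵢ · ŷᵢ − ∑_{a ∈ A} x(a) · y(a)| ≤ ε · ‖x‖₁ · ‖y‖₁] ≥ 1 − δ. -/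
/-!
Write `W i = (∑ₐ x a hᵢ(a)) (∑ₐ y a hᵢ(a))`, so that the sketch inner product is the empirical
mean `(1/t) ∑ᵢ W i`. Since the signs are orthonormal, `E[W i] = ⟨x, y⟩`, and since they have
absolute value one, `|W i| ≤ ‖x‖₁ ‖y‖₁`. The `W i` are independent, so Hoeffding's inequality
bounds the probability of a deviation larger than `ε ‖x‖₁ ‖y‖₁` by `2 exp (-ε² t / 2) ≤ δ`.
-/

open MeasureTheory ProbabilityTheory
open scoped NNReal

lemma abs_sum_mul_le_sum_abs {A : Type*} (s : Finset A) (x v : A → ℝ) (hv : ∀ a ∈ s, |v a| ≤ 1) :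
    |∑ a ∈ s, x a * v a| ≤ ∑ a ∈ s, |x a| :=
  (Finset.abs_sum_le_sum_abs _ _).trans <| Finset.sum_le_sum fun a ha => by
    rw [abs_mul]
    exact mul_le_of_le_one_right (abs_nonneg _) (hv a ha)

lemma abs_sum_mul_mul_sum_mul_le {A : Type*} [Fintype A] (x y v : A → ℝ) (hv : ∀ a, |v a| ≤ 1) :
    |(∑ a, x a * v a) * (∑ a, y a * v a)| ≤ (∑ a, |x a|) * (∑ a, |y a|) := by
  rw [abs_mul]
  exact mul_le_mul (abs_sum_mul_le_sum_abs _ x v fun a _ => hv a)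
    (abs_sum_mul_le_sum_abs _ y v fun a _ => hv a) (abs_nonneg _) (by positivity)

lemma lt_abs_sum_scaled_mul_sub_iff {n : ℕ} (hn : 0 < n) (u v : Fin n → ℝ) (c d : ℝ) :
    d < |∑ i, (1 / √n * u i) * (1 / √n * v i) - c| ↔ n * d < |∑ i, (u i * v i - c)| := by
  have hterm (i : Fin n) : (1 / √n * u i) * (1 / √n * v i) = u i * v i / n := by
    rw [mul_mul_mul_comm, ← sq, div_pow, Real.sq_sqrt n.cast_nonneg, one_pow, one_div_mul_eq_div]
  have hsum : ∑ i, (u i * v i - c) = n * (∑ i, (1 / √n * u i) * (1 / √n * v i) - c) := by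
    simp only [hterm, ← Finset.sum_div, Finset.sum_sub_distrib, Finset.sum_const,
      Finset.card_univ, Fintype.card_fin, nsmul_eq_mul]
    field_simp
  rw [hsum, abs_mul, Nat.abs_cast, mul_lt_mul_iff_right₀ (by positivity)]

lemma two_mul_exp_neg_sq_le {ε δ t : ℝ} (hε : 0 < ε) (hδ : 0 < δ) (ht₀ : 0 ≤ t)
    (ht : 2 / ε ^ 2 * Real.log (2 / δ) ≤ t) : 2 * Real.exp (-(ε * √t) ^ 2 / 2) ≤ δ := by
  have hlog : Real.log (2 / δ) ≤ (ε * √t) ^ 2 / 2 := by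
    rw [div_mul_eq_mul_div, div_le_iff₀ (by positivity)] at ht
    rw [mul_pow, Real.sq_sqrt ht₀]
    linarith
  calc 2 * Real.exp (-(ε * √t) ^ 2 / 2) ≤ 2 * Real.exp (-Real.log (2 / δ)) := by
        rw [neg_div]
        gcongr
    _ = δ := by
        rw [Real.exp_neg, Real.exp_log (by positivity)]
        field_simp

namespace ProbabilityTheory

variable {Ω : Type*} [MeasurableSpace Ω] {μ : Measure Ω}

lemma ofReal_one_sub_le_measure_of_measureReal_compl_le [IsProbabilityMeasure μ] {s : Set Ω}
    {δ : ℝ} (h : μ.real sᶜ ≤ δ) : ENNReal.ofReal (1 - δ) ≤ μ s := by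
  have hcover : 1 ≤ μ s + μ sᶜ := by
    simpa [Set.union_compl_self] using measure_union_le (μ := μ) s sᶜ
  calc ENNReal.ofReal (1 - δ) ≤ ENNReal.ofReal (1 - μ.real sᶜ) := by gcongr
    _ = 1 - μ sᶜ := by
      rw [ENNReal.ofReal_sub _ measureReal_nonneg, ENNReal.ofReal_one, ofReal_measureReal]
    _ ≤ μ s := tsub_le_iff_right.2 hcover

/- The threshold is normalised by `√c` so that the bound also covers `c = 0`, where
`exp (-ε ^ 2 / (2 * c))` degenerates to `1`. -/
lemma HasSubgaussianMGF.measureReal_lt_abs_le [IsFiniteMeasure μ] {X : Ω → ℝ} {c : ℝ≥0}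
    (h : HasSubgaussianMGF X c μ) {r : ℝ} (hr : 0 < r) :
    μ.real {ω | r * √c < |X ω|} ≤ 2 * Real.exp (-r ^ 2 / 2) := by
  rcases eq_or_ne c 0 with rfl | hc
  · have hnull : μ {ω | r * √((0 : ℝ≥0) : ℝ) < |X ω|} = 0 := by
      refine measure_mono_null (fun ω hω => ?_) (ae_eq_zero_of_hasSubgaussianMGF_zero h)
      simp_all
    rw [measureReal_def, hnull, ENNReal.toReal_zero]
    positivity
  have hexp : Real.exp (-(r * √c) ^ 2 / (2 * c)) = Real.exp (-r ^ 2 / 2) := by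
    rw [mul_pow, Real.sq_sqrt c.coe_nonneg]
    field_simp
  have hε : 0 ≤ r * √c := by positivity
  calc μ.real {ω | r * √c < |X ω|}
      ≤ μ.real ({ω | r * √c ≤ X ω} ∪ {ω | r * √c ≤ (-X) ω}) := by
        refine measureReal_mono (fun ω (hω : r * √c < |X ω|) => ?_)
        rcases lt_abs.1 hω with hω | hω
        exacts [Or.inl hω.le, Or.inr hω.le]
    _ ≤ μ.real {ω | r * √c ≤ X ω} + μ.real {ω | r * √c ≤ (-X) ω} := measureReal_union_le _ _
    _ ≤ 2 * Real.exp (-r ^ 2 / 2) := by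
        rw [two_mul, ← hexp]
        exact add_le_add (h.measure_ge_le hε) (h.neg.measure_ge_le hε)

lemma measureReal_lt_abs_sum_sub_integral_le [IsProbabilityMeasure μ] {ι : Type*} [Fintype ι]
    {X : ι → Ω → ℝ} (hindep : iIndepFun X μ) (hmeas : ∀ i, AEMeasurable (X i) μ) {M : ℝ}
    (hbound : ∀ i, ∀ᵐ ω ∂μ, X i ω ∈ Set.Icc (-M) M) {r : ℝ} (hr : 0 < r) :
    μ.real {ω | r * (√(Fintype.card ι) * |M|) < |∑ i, (X i ω - μ[X i])|}
      ≤ 2 * Real.exp (-r ^ 2 / 2) := by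
  have hcentered : iIndepFun (fun i ω => X i ω - μ[X i]) μ := by
    exact hindep.comp (fun i v => v - μ[X i]) fun _ => measurable_id.sub_const _
  have hsum := HasSubgaussianMGF.sum_of_iIndepFun hcentered (s := Finset.univ)
    fun i _ => hasSubgaussianMGF_of_mem_Icc (hmeas i) (hbound i)
  convert hsum.measureReal_lt_abs_le hr using 5
  push_cast
  rw [Finset.sum_const, Finset.card_univ, nsmul_eq_mul, Real.sqrt_mul (Nat.cast_nonneg _),
    Real.sqrt_sq (by positivity), sub_neg_eq_add, ← two_mul, norm_mul, Real.norm_two,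
    Real.norm_eq_abs, mul_div_cancel_left₀ _ two_ne_zero]

section RandomSigns

variable [IsProbabilityMeasure μ] {A : Type*} {g : Ω → A → ℝ}

lemma integral_mul_eq_ite [DecidableEq A] (hsq : ∀ a, ∀ᵐ ω ∂μ, g ω a ^ 2 = 1)
    (huncorr : ∀ a b, a ≠ b → ∫ ω, g ω a * g ω b ∂μ = 0) (a b : A) :
    ∫ ω, g ω a * g ω b ∂μ = if a = b then 1 else 0 := by
  split_ifs with hab
  · subst hab
    rw [integral_congr_ae ((hsq a).mono fun ω hω => (sq (g ω a)).symm.trans hω)]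
    simp
  · exact huncorr a b hab

lemma integral_sum_mul_mul_sum_mul_eq [Fintype A] (hmeas : ∀ a, Measurable fun ω => g ω a)
    (hsq : ∀ a, ∀ᵐ ω ∂μ, g ω a ^ 2 = 1)
    (huncorr : ∀ a b, a ≠ b → ∫ ω, g ω a * g ω b ∂μ = 0) (x y : A → ℝ) :
    ∫ ω, (∑ a, x a * g ω a) * (∑ b, y b * g ω b) ∂μ = ∑ a, x a * y a := by
  classical
  have hint (a b : A) : Integrable (fun ω => x a * y b * (g ω a * g ω b)) μ := by
    refine Integrable.of_bound (by fun_prop) (|x a * y b|) ?_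
    filter_upwards [hsq a, hsq b] with ω ha hb
    rw [norm_mul, Real.norm_eq_abs, Real.norm_eq_abs, abs_mul (g ω a)]
    exact mul_le_of_le_one_right (abs_nonneg _) (mul_le_one₀ ((sq_le_one_iff_abs_le_one _).1 ha.le)
      (abs_nonneg _) ((sq_le_one_iff_abs_le_one _).1 hb.le))
  calc ∫ ω, (∑ a, x a * g ω a) * (∑ b, y b * g ω b) ∂μ
      = ∫ ω, ∑ a, ∑ b, x a * y b * (g ω a * g ω b) ∂μ := by
        congr 1 with ω
        rw [Finset.sum_mul_sum]
        exact Finset.sum_congr rfl fun a _ => Finset.sum_congr rfl fun b _ => by ring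
    _ = ∑ a, ∑ b, x a * y b * ∫ ω, g ω a * g ω b ∂μ := by
        rw [integral_finsetSum _ fun a _ => integrable_finsetSum _ fun b _ => hint a b]
        simp_rw [integral_finsetSum _ fun b _ => hint _ b, integral_const_mul]
    _ = ∑ a, x a * y a := by
        simp [integral_mul_eq_ite hsq huncorr]

end RandomSigns

end ProbabilityTheory

theorem sketch_inner_product_approximation_general
    {A Ω : Type*} [Fintype A] [MeasurableSpace Ω]
    (P : Measure Ω) [IsProbabilityMeasure P]
    (x y : A → ℝ)
    (ε δ : ℝ) (hε : 0 < ε) (hδ : 0 < δ)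
    (t : ℕ) (ht : 0 < t)
    (htbound : (2 / ε ^ 2) * Real.log (2 / δ) ≤ (t : ℝ))
    (h : Fin t → Ω → A → ℝ)
    (hmeas : ∀ (i : Fin t) (a : A), Measurable (fun ω => h i ω a))
    (hindep : iIndepFun h P)
    (hsq : ∀ (i : Fin t) (a : A), ∀ᵐ ω ∂P, (h i ω a) ^ 2 = 1)
    (huncorr : ∀ (i : Fin t) (a b : A), a ≠ b → ∫ ω, h i ω a * h i ω b ∂P = 0) :
    P {ω | |(∑ i : Fin t,
            ((1 / Real.sqrt t) * ∑ a : A, x a * h i ω a) *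
            ((1 / Real.sqrt t) * ∑ a : A, y a * h i ω a))
          - ∑ a : A, x a * y a|
        ≤ ε * (∑ a : A, |x a|) * (∑ a : A, |y a|)}
      ≥ ENNReal.ofReal (1 - δ) := by
  set K := (∑ a, |x a|) * (∑ a, |y a|)
  set W : Fin t → Ω → ℝ := fun i ω => (∑ a, x a * h i ω a) * (∑ a, y a * h i ω a)
  have hW_mean (i : Fin t) : P[W i] = ∑ a, x a * y a :=
    integral_sum_mul_mul_sum_mul_eq (hmeas i) (hsq i) (huncorr i) x y
  have hW_bound (i : Fin t) : ∀ᵐ ω ∂P, W i ω ∈ Set.Icc (-K) K := by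
    filter_upwards [ae_all_iff.2 (hsq i)] with ω hω
    exact abs_le.1 <| abs_sum_mul_mul_sum_mul_le x y _ fun a =>
      (sq_le_one_iff_abs_le_one _).1 (hω a).le
  have hW_indep : iIndepFun W P :=
    hindep.comp (fun _ v => (∑ a, x a * v a) * (∑ a, y a * v a)) fun _ => by fun_prop
  have hdev := measureReal_lt_abs_sum_sub_integral_le hW_indep (fun i => by fun_prop) hW_bound
    (r := ε * √t) (by positivity)
  simp only [hW_mean, Fintype.card_fin] at hdev
  refine ofReal_one_sub_le_measure_of_measureReal_compl_le <|
    (le_of_eq ?_).trans (hdev.trans (two_mul_exp_neg_sq_le hε hδ t.cast_nonneg htbound))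
  have hscale : ε * √t * (√t * |K|) = t * (ε * (∑ a, |x a|) * (∑ a, |y a|)) := by
    rw [abs_of_nonneg (by positivity)]
    linear_combination ε * K * Real.mul_self_sqrt t.cast_nonneg
  congr 1 with ω
  simp only [Set.mem_compl_iff, Set.mem_ofPred_eq, not_le, W, hscale,
    lt_abs_sum_scaled_mul_sub_iff ht]

/-- Theorem 1, part 2: if `t ≥ (2/ε²) ln(2/δ)`, then with probability at least
`1 − δ` the sketch inner product `∑ᵢ x̂ᵢ ŷᵢ` approximates the kernel value
`⟨x, y⟩` up to additive error `ε ‖x‖₁ ‖y‖₁`. -/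
theorem sketch_inner_product_approximation
    {A Ω : Type*} [Fintype A] [MeasurableSpace Ω]
    (P : Measure Ω) [IsProbabilityMeasure P]
    (x y : A → ℝ)
    (ε δ : ℝ) (hε : 0 < ε) (hε1 : ε < 1) (hδ : 0 < δ) (hδ1 : δ < 1)
    (t : ℕ) (ht : 0 < t)
    (htbound : (2 / ε ^ 2) * Real.log (2 / δ) ≤ (t : ℝ))
    (h : Fin t → Ω → A → ℝ)
    (hmeas : ∀ (i : Fin t) (a : A), Measurable (fun ω => h i ω a))
    (hindep : iIndepFun h P)
    (hsq : ∀ (i : Fin t) (a : A), ∀ᵐ ω ∂P, (h i ω a) ^ 2 = 1)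
    (huncorr : ∀ (i : Fin t) (a b : A), a ≠ b → ∫ ω, h i ω a * h i ω b ∂P = 0) :
    P {ω | |(∑ i : Fin t,
            ((1 / Real.sqrt t) * ∑ a : A, x a * h i ω a) *
            ((1 / Real.sqrt t) * ∑ a : A, y a * h i ω a))
          - ∑ a : A, x a * y a|
        ≤ ε * (∑ a : A, |x a|) * (∑ a : A, |y a|)}
      ≥ ENNReal.ofReal (1 - δ) :=
  sketch_inner_product_approximation_general P x y ε δ hε hδ t ht htbound h hmeas hindep hsq huncorr
end
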